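/- Let m be a real number with 9/8 < m ≤ 2. Then there exist real numbers p₀, q₀, p with 1 ≤ p₀ < 9(m−1), 1 < q₀ < 2, p ≥ 7/4, such that max{1, p₀/3 + 1 − m, m − 1 + p₀·q₀/(q₀+1), (q₀+1)/3 + 1 − m, q₀ + 2 − 2p₀/3 − m} < p < (2(m−1) + 2p₀/3)·q₀ + m − 1. -/
import Mathlib


theorem exists_admissible_exponents
    (m : ℝ) (hm₁ : 9 / 8 < m) (hm₂ : m ≤ 2) :
    ∃ p₀ q₀ p : ℝ,
      1 ≤ p₀ ∧ p₀ < 9 * (m - 1) ∧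
      1 < q₀ ∧ q₀ < 2 ∧
      7 / 4 ≤ p ∧
      max 1 (max (p₀ / 3 + 1 - m)
        (max (m - 1 + p₀ * q₀ / (q₀ + 1))
          (max ((q₀ + 1) / 3 + 1 - m) (q₀ + 2 - 2 * p₀ / 3 - m)))) < p ∧
      p < (2 * (m - 1) + 2 * p₀ / 3) * q₀ + m - 1 := by
  have hp₀ : (1 : ℝ) ≤ 5 * m - 9 / 2 := by linarith
  have hp₀' : 5 * m - 9 / 2 < 9 * (m - 1) := by linarith
  set M : ℝ := max 1 (max ((5 * m - 9 / 2) / 3 + 1 - m)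
        (max (m - 1 + (5 * m - 9 / 2) * (15 / 8) / ((15 : ℝ) / 8 + 1))
          (max (((15 : ℝ) / 8 + 1) / 3 + 1 - m)
            ((15 : ℝ) / 8 + 2 - 2 * (5 * m - 9 / 2) / 3 - m)))) with hM
  have hMU : M < (2 * (m - 1) + 2 * (5 * m - 9 / 2) / 3) * (15 / 8) + m - 1 := by
    rw [hM]
    simp only [max_lt_iff]
    norm_num
    refine ⟨by nlinarith, by nlinarith, by nlinarith, by nlinarith, by nlinarith⟩
  have h74 : (7 : ℝ) / 4 < (2 * (m - 1) + 2 * (5 * m - 9 / 2) / 3) * (15 / 8) + m - 1 := by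
    nlinarith
  refine ⟨5 * m - 9 / 2, 15 / 8,
    max (7 / 4) ((M + ((2 * (m - 1) + 2 * (5 * m - 9 / 2) / 3) * (15 / 8) + m - 1)) / 2),
    hp₀, hp₀', by norm_num, by norm_num, le_max_left _ _, ?_, ?_⟩
  · exact lt_max_of_lt_right (by linarith)
  · exact max_lt h74 (by linarith)
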